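/- arXiv:2008.10847 — 4 statements merged into one kernel-verified Lean document; each statement's English description precedes it below -/
import Mathlib

section
/- Let θ : ℝ → ℝ^d and y : ℝ → ℝ^m be differentiable curves satisfying θ'(t) = −α Dg(θ(t))ᵀ ∇f(y(t)) with α > 0. If Dg has operator norm bounded by C_g and ∇f is L_f-Lipschitz, then for all t, d/dt [f(g(θ(t)))] ≤ −(1/(2α))‖θ'(t)‖² + (α C_g² L_f² / 2)‖g(θ(t)) − y(t)‖². -/
/-!
By the chain rule, `d/dt f(g(θ t)) = ⟪Dg(θ)ᵀ ∇f(g(θ)), θ'⟫`. The flow gives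
`Dg(θ)ᵀ ∇f(y) = -α⁻¹ θ'`, so the derivative equals `⟪Dg(θ)ᵀ (∇f(g(θ)) - ∇f(y)), θ'⟫ - α⁻¹ ‖θ'‖²`.
Young's inequality splits the cross term into `‖θ'‖² / (2α)` plus `α/2` times the squared
error term, which is at most `(C_g L_f ‖g(θ) - y‖)²`.
-/

open RealInnerProductSpace

lemma real_inner_le_norm_sq_div_add {E : Type*} [NormedAddCommGroup E] [InnerProductSpace ℝ E]
    {α : ℝ} (hα : 0 < α) (x v : E) :
    ⟪x, v⟫ ≤ 1 / (2 * α) * ‖v‖ ^ 2 + α / 2 * ‖x‖ ^ 2 := by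
  have h := norm_sub_sq_real v (α • x)
  rw [real_inner_smul_right, norm_smul, Real.norm_of_nonneg hα.le, real_inner_comm] at h
  have hsq : 0 ≤ ‖v - α • x‖ ^ 2 := sq_nonneg _
  rw [div_mul_eq_mul_div, one_mul, div_add' _ _ _ (by positivity), le_div_iff₀ (by positivity)]
  nlinarith

variable {E F : Type*} [NormedAddCommGroup E] [InnerProductSpace ℝ E] [CompleteSpace E]
  [NormedAddCommGroup F] [InnerProductSpace ℝ F] [CompleteSpace F]

lemma deriv_comp_comp_eq_inner_adjoint_gradient {f : F → ℝ} {g : E → F} {θ : ℝ → E}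
    {v : E} {t : ℝ} (hf : DifferentiableAt ℝ f (g (θ t))) (hg : DifferentiableAt ℝ g (θ t))
    (hθ : HasDerivAt θ v t) :
    deriv (fun s => f (g (θ s))) t
      = ⟪(fderiv ℝ g (θ t)).adjoint (gradient f (g (θ t))), v⟫ := by
  rw [ContinuousLinearMap.adjoint_inner_left, inner_gradient_left]
  exact ((hf.hasFDerivAt.comp _ hg.hasFDerivAt).comp_hasDerivAt t hθ).deriv

lemma inner_adjoint_le_of_eq_neg_smul_adjoint {α : ℝ} (hα : 0 < α) (A : E →L[ℝ] F)
    {u w : F} {v : E} (hv : v = -α • A.adjoint w) :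
    ⟪A.adjoint u, v⟫ ≤ -(1 / (2 * α)) * ‖v‖ ^ 2 + α / 2 * ‖A.adjoint (u - w)‖ ^ 2 := by
  have hw : A.adjoint w = -α⁻¹ • v := by
    rw [hv, smul_smul, neg_mul_neg, inv_mul_cancel₀ hα.ne', one_smul]
  have hsplit : ⟪A.adjoint u, v⟫ = ⟪A.adjoint (u - w), v⟫ - α⁻¹ * ‖v‖ ^ 2 := by
    rw [map_sub, inner_sub_left, hw, real_inner_smul_left, real_inner_self_eq_norm_sq]
    ring
  have hinv : α⁻¹ = 1 / (2 * α) + 1 / (2 * α) := by field_simp; ring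
  rw [hsplit, hinv]
  linarith [real_inner_le_norm_sq_div_add hα (A.adjoint (u - w)) v]

theorem stmt2_general {d m : ℕ}
    (f : EuclideanSpace ℝ (Fin m) → ℝ)
    (g : EuclideanSpace ℝ (Fin d) → EuclideanSpace ℝ (Fin m))
    (Cg Lf α : ℝ) (hα : 0 < α)
    (hf : ContDiff ℝ 1 f) (hg : ContDiff ℝ 1 g)
    (hCg : ∀ θ, ‖fderiv ℝ g θ‖ ≤ Cg)
    (hLf : ∀ u v, ‖gradient f u - gradient f v‖ ≤ Lf * ‖u - v‖)
    (θ : ℝ → EuclideanSpace ℝ (Fin d)) (y : ℝ → EuclideanSpace ℝ (Fin m))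
    (θ' : ℝ → EuclideanSpace ℝ (Fin d))
    (hODE : ∀ t, HasDerivAt θ (θ' t) t)
    (hθ' : ∀ t, θ' t = -α • (ContinuousLinearMap.adjoint (fderiv ℝ g (θ t))) (gradient f (y t))) :
    ∀ t, deriv (fun s => f (g (θ s))) t
      ≤ -(1 / (2 * α)) * ‖θ' t‖ ^ 2 + (α * Cg ^ 2 * Lf ^ 2 / 2) * ‖g (θ t) - y t‖ ^ 2 := by
  intro t
  set A := fderiv ℝ g (θ t)
  have herror : ‖A.adjoint (gradient f (g (θ t)) - gradient f (y t))‖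
      ≤ Cg * (Lf * ‖g (θ t) - y t‖) := by
    refine (A.adjoint.le_opNorm _).trans
      (mul_le_mul ?_ (hLf _ _) (norm_nonneg _) ((norm_nonneg _).trans (hCg (θ t))))
    rw [ContinuousLinearMap.adjoint.norm_map]
    exact hCg _
  rw [deriv_comp_comp_eq_inner_adjoint_gradient (hf.differentiable one_ne_zero _)
    (hg.differentiable one_ne_zero _) (hODE t)]
  calc ⟪A.adjoint (gradient f (g (θ t))), θ' t⟫
      ≤ -(1 / (2 * α)) * ‖θ' t‖ ^ 2
          + α / 2 * ‖A.adjoint (gradient f (g (θ t)) - gradient f (y t))‖ ^ 2 :=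
        inner_adjoint_le_of_eq_neg_smul_adjoint hα A (hθ' t)
    _ ≤ -(1 / (2 * α)) * ‖θ' t‖ ^ 2 + α / 2 * (Cg * (Lf * ‖g (θ t) - y t‖)) ^ 2 := by
        gcongr
    _ = _ := by ring

theorem stmt2 {d m : ℕ}
    (f : EuclideanSpace ℝ (Fin m) → ℝ)
    (g : EuclideanSpace ℝ (Fin d) → EuclideanSpace ℝ (Fin m))
    (Cg Lf α : ℝ) (hα : 0 < α)
    (hf : ContDiff ℝ 1 f) (hg : ContDiff ℝ 1 g)
    (hCg : ∀ θ, ‖fderiv ℝ g θ‖ ≤ Cg)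
    (hLf : ∀ u v, ‖gradient f u - gradient f v‖ ≤ Lf * ‖u - v‖)
    (θ : ℝ → EuclideanSpace ℝ (Fin d)) (y : ℝ → EuclideanSpace ℝ (Fin m))
    (θ' : ℝ → EuclideanSpace ℝ (Fin d))
    (hy : Differentiable ℝ y)
    (hODE : ∀ t, HasDerivAt θ (θ' t) t)
    (hθ' : ∀ t, θ' t = -α • (ContinuousLinearMap.adjoint (fderiv ℝ g (θ t))) (gradient f (y t))) :
    ∀ t, deriv (fun s => f (g (θ s))) t
      ≤ -(1 / (2 * α)) * ‖θ' t‖ ^ 2 + (α * Cg ^ 2 * Lf ^ 2 / 2) * ‖g (θ t) - y t‖ ^ 2 :=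
  stmt2_general f g Cg Lf α hα hf hg hCg hLf θ y θ' hODE hθ'
end

section
/- Consider the continuous-time dynamics θ'(t) = −α Dg(θ(t))ᵀ ∇f(y(t)) and y'(t) = −β(y(t) − g(θ(t))) + Dg(θ(t)) θ'(t) with α > 0 and β ≥ α C_g² L_f² / 2. Then the energy V(t) := f(g(θ(t))) + ‖g(θ(t)) − y(t)‖² satisfies V'(t) ≤ 0 for all t, i.e., V is non-increasing. -/
/-!
Along the flow, with `p = Dg(θ)ᵀ ∇f(g θ)` and `q = Dg(θ)ᵀ ∇f(y)`, the chain rule and the two ODEs give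
`V' = -α ⟪p, q⟫ - 2β ‖g θ - y‖²`. Polarization gives `⟪p, q⟫ ≥ -‖p - q‖² / 4`, and
`‖p - q‖ ≤ C_g L_f ‖g θ - y‖`, so the first term is at most `(α C_g² L_f² / 4) ‖g θ - y‖² ≤ (β / 2) ‖g θ - y‖²`,
which the second term absorbs.
-/

open InnerProductSpace ContinuousLinearMap
open scoped RealInnerProductSpace

section

variable {E F : Type*} [NormedAddCommGroup E] [InnerProductSpace ℝ E]
  [NormedAddCommGroup F] [InnerProductSpace ℝ F]

lemma neg_norm_sub_sq_div_four_le_real_inner (x y : F) : -(‖x - y‖ ^ 2 / 4) ≤ ⟪x, y⟫_ℝ := by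
  have h₁ := norm_add_sq_real x y
  have h₂ := norm_sub_sq_real x y
  nlinarith [sq_nonneg ‖x + y‖]

lemma HasDerivAt.comp_add_norm_sub_sq [CompleteSpace F] {f : F → ℝ} {g : E → F}
    {θ : ℝ → E} {y : ℝ → F} {θ' : E} {y' : F} {t : ℝ}
    (hf : DifferentiableAt ℝ f (g (θ t))) (hg : DifferentiableAt ℝ g (θ t))
    (hθ : HasDerivAt θ θ' t) (hy : HasDerivAt y y' t) :
    HasDerivAt (fun s => f (g (θ s)) + ‖g (θ s) - y s‖ ^ 2)
      (⟪gradient f (g (θ t)), fderiv ℝ g (θ t) θ'⟫_ℝ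
        + 2 * ⟪g (θ t) - y t, fderiv ℝ g (θ t) θ' - y'⟫_ℝ) t := by
  have hgθ : HasDerivAt (fun s => g (θ s)) (fderiv ℝ g (θ t) θ') t :=
    hg.hasFDerivAt.comp_hasDerivAt t hθ
  exact (hf.hasGradientAt.hasFDerivAt.comp_hasDerivAt t hgθ).add (hgθ.sub hy).norm_sq

lemma neg_mul_real_inner_sub_two_mul_sq_nonpos {p q : F} {r Cg Lf α β : ℝ}
    (hα : 0 ≤ α) (hβ : α * Cg ^ 2 * Lf ^ 2 / 2 ≤ β) (hpq : ‖p - q‖ ≤ Cg * Lf * r) :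
    -α * ⟪p, q⟫_ℝ - 2 * β * r ^ 2 ≤ 0 := by
  have hsq : ‖p - q‖ ^ 2 ≤ Cg ^ 2 * Lf ^ 2 * r ^ 2 := by
    calc ‖p - q‖ ^ 2 ≤ (Cg * Lf * r) ^ 2 := pow_le_pow_left₀ (norm_nonneg _) hpq 2
      _ = _ := by ring
  have hinner := neg_norm_sub_sq_div_four_le_real_inner p q
  nlinarith [mul_le_mul_of_nonneg_left hinner hα, mul_le_mul_of_nonneg_right hβ (sq_nonneg r),
    mul_le_mul_of_nonneg_left hsq hα, sq_nonneg r]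

end

theorem stmt3 {d m : ℕ}
    (f : EuclideanSpace ℝ (Fin m) → ℝ)
    (g : EuclideanSpace ℝ (Fin d) → EuclideanSpace ℝ (Fin m))
    (Cg Lf α β : ℝ) (hα : 0 < α) (hβ : β ≥ α * Cg ^ 2 * Lf ^ 2 / 2)
    (hf : ContDiff ℝ 1 f) (hg : ContDiff ℝ 1 g)
    (hCg : ∀ θ, ‖fderiv ℝ g θ‖ ≤ Cg)
    (hLf : ∀ u v, ‖gradient f u - gradient f v‖ ≤ Lf * ‖u - v‖)
    (θ : ℝ → EuclideanSpace ℝ (Fin d)) (y : ℝ → EuclideanSpace ℝ (Fin m))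
    (θ' : ℝ → EuclideanSpace ℝ (Fin d)) (y' : ℝ → EuclideanSpace ℝ (Fin m))
    (hθD : ∀ t, HasDerivAt θ (θ' t) t)
    (hyD : ∀ t, HasDerivAt y (y' t) t)
    (hODEθ : ∀ t, θ' t = -α • (ContinuousLinearMap.adjoint (fderiv ℝ g (θ t))) (gradient f (y t)))
    (hODEy : ∀ t, y' t = -β • (y t - g (θ t)) + (fderiv ℝ g (θ t)) (θ' t)) :
    ∀ t, deriv (fun s => f (g (θ s)) + ‖g (θ s) - y s‖ ^ 2) t ≤ 0 := by
  intro t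
  set G := fderiv ℝ g (θ t)
  set u := g (θ t)
  have hV := HasDerivAt.comp_add_norm_sub_sq (hf.differentiable one_ne_zero u)
    (hg.differentiable one_ne_zero (θ t)) (hθD t) (hyD t)
  have hdescent : ⟪gradient f u, G (θ' t)⟫_ℝ
      = -α * ⟪adjoint G (gradient f u), adjoint G (gradient f (y t))⟫_ℝ := by
    rw [← adjoint_inner_left, hODEθ t, real_inner_smul_right]
  have hrelax : G (θ' t) - y' t = (-β) • (u - y t) := by
    rw [hODEy t]
    module
  have hgap :
      ‖adjoint G (gradient f u) - adjoint G (gradient f (y t))‖ ≤ Cg * Lf * ‖u - y t‖ := by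
    rw [← map_sub, mul_assoc]
    calc _ ≤ ‖adjoint G‖ * ‖gradient f u - gradient f (y t)‖ := le_opNorm _ _
      _ ≤ Cg * (Lf * ‖u - y t‖) := by
        gcongr
        · exact (norm_nonneg _).trans (hCg (θ t))
        · simpa using hCg (θ t)
        · exact hLf _ _
  rw [hV.deriv, hdescent, hrelax, real_inner_smul_right, real_inner_self_eq_norm_sq]
  linarith [neg_mul_real_inner_sub_two_mul_sq_nonpos hα.le hβ hgap]
end

section
/- Suppose the SCSC tracking update y^{k+1} = (1−β)(y^k + g(θ^k; φ) − g(θ^{k−1}; φ)) + β g(θ^k; φ), where φ is a random sample with E[g(θ; φ)] = g(θ), E‖g(θ; φ) − g(θ)‖² ≤ V_g², and g(·; φ) is C_g-Lipschitz almost surely (as is g). Then conditioned on the past, E‖g(θ^k) − y^{k+1}‖² ≤ (1−β)²‖g(θ^{k−1}) − y^k‖² + 4(1−β)² C_g² ‖θ^k − θ^{k−1}‖² + 2β² V_g². -/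
/-!
The new tracking error splits as `(1 - β) (g θ^{k-1} - y^k)` plus a noise term of mean
zero, so the cross term integrates away and the expected square is the squared propagated
error plus the second moment of the noise. The noise is `(1 - β)` times the centred
increment `g(θ^k; φ) - g(θ^{k-1}; φ)` plus `β` times the centred oracle error; by
`(u + v)² ≤ 2u² + 2v²` and "variance ≤ second moment" its second moment is at most
`2 (1 - β)² C_g² ‖θ^k - θ^{k-1}‖² + 2 β² V_g²`.
-/

open MeasureTheory RealInnerProductSpace

section SecondMoment

variable {Ω E : Type*} [MeasurableSpace Ω] {μ : Measure Ω}

section NormedAddCommGroup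

variable [NormedAddCommGroup E]

theorem integral_norm_sq_le_of_forall_norm_le [IsProbabilityMeasure μ] {X : Ω → E} {C : ℝ}
    (hC : ∀ ω, ‖X ω‖ ≤ C) :
    ∫ ω, ‖X ω‖ ^ 2 ∂μ ≤ C ^ 2 := by
  calc ∫ ω, ‖X ω‖ ^ 2 ∂μ ≤ ∫ _ω, C ^ 2 ∂μ :=
        integral_mono_of_nonneg (.of_forall fun ω => sq_nonneg _) (integrable_const _)
          (.of_forall fun ω => pow_le_pow_left₀ (norm_nonneg _) (hC ω) 2)
    _ = C ^ 2 := by simp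

theorem integral_norm_smul_add_smul_sq_le [NormedSpace ℝ E] (a b : ℝ) {X Y : Ω → E}
    (hX : MemLp X 2 μ) (hY : MemLp Y 2 μ) :
    ∫ ω, ‖a • X ω + b • Y ω‖ ^ 2 ∂μ
      ≤ 2 * a ^ 2 * ∫ ω, ‖X ω‖ ^ 2 ∂μ + 2 * b ^ 2 * ∫ ω, ‖Y ω‖ ^ 2 ∂μ := by
  have hX2 := hX.norm.integrable_sq.const_mul (2 * a ^ 2)
  have hY2 := hY.norm.integrable_sq.const_mul (2 * b ^ 2)
  rw [← integral_const_mul, ← integral_const_mul, ← integral_add hX2 hY2]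
  refine integral_mono_of_nonneg (.of_forall fun ω => sq_nonneg _) (hX2.add hY2)
    (.of_forall fun ω => ?_)
  calc ‖a • X ω + b • Y ω‖ ^ 2 ≤ (|a| * ‖X ω‖ + |b| * ‖Y ω‖) ^ 2 := by
        gcongr
        simpa only [norm_smul, Real.norm_eq_abs] using norm_add_le (a • X ω) (b • Y ω)
    _ ≤ 2 * ((|a| * ‖X ω‖) ^ 2 + (|b| * ‖Y ω‖) ^ 2) := add_sq_le
    _ = 2 * a ^ 2 * ‖X ω‖ ^ 2 + 2 * b ^ 2 * ‖Y ω‖ ^ 2 := by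
        simp only [mul_pow, sq_abs]; ring

end NormedAddCommGroup

section InnerProductSpace

variable [IsProbabilityMeasure μ] [NormedAddCommGroup E] [InnerProductSpace ℝ E]
  [CompleteSpace E]

theorem integral_integral_sub_eq_zero {X : Ω → E} (hX : Integrable X μ) :
    ∫ ω, (∫ ω', X ω' ∂μ - X ω) ∂μ = 0 := by
  simpa only [average_eq_integral] using integral_average_sub hX

theorem integral_norm_add_sq_of_integral_eq_zero (a : E) {Z : Ω → E} (hZ : MemLp Z 2 μ)
    (hZ0 : ∫ ω, Z ω ∂μ = 0) :
    ∫ ω, ‖a + Z ω‖ ^ 2 ∂μ = ‖a‖ ^ 2 + ∫ ω, ‖Z ω‖ ^ 2 ∂μ := by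
  have hZint : Integrable Z μ := hZ.integrable one_le_two
  have hcross : Integrable (fun ω => 2 * ⟪a, Z ω⟫) μ := (hZint.const_inner a).const_mul 2
  have hfirst : Integrable (fun ω => ‖a‖ ^ 2 + 2 * ⟪a, Z ω⟫) μ :=
    (integrable_const _).add hcross
  simp_rw [norm_add_sq_real]
  rw [integral_add hfirst hZ.norm.integrable_sq, integral_add (integrable_const _) hcross,
    integral_const_mul, integral_inner hZint, hZ0]
  simp

theorem integral_norm_sub_integral_sq_le {X : Ω → E} (hX : MemLp X 2 μ) :
    ∫ ω, ‖X ω - ∫ ω', X ω' ∂μ‖ ^ 2 ∂μ ≤ ∫ ω, ‖X ω‖ ^ 2 ∂μ := by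
  have hmean : ∫ ω, (X ω - ∫ ω', X ω' ∂μ) ∂μ = 0 := by
    simpa only [average_eq_integral] using integral_sub_average μ X
  have hpyth := integral_norm_add_sq_of_integral_eq_zero (∫ ω', X ω' ∂μ)
    (Z := fun ω => X ω - ∫ ω', X ω' ∂μ) (hX.sub (memLp_const _)) hmean
  simp only [add_sub_cancel] at hpyth
  rw [hpyth]
  exact le_add_of_nonneg_left (sq_nonneg _)

def trackingUpdate (β : ℝ) (y x x' : E) : E :=
  (1 - β) • (y + x - x') + β • x

theorem integral_norm_sub_trackingUpdate_sq_le (β : ℝ) (y : E) {X X' : Ω → E}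
    (hX : MemLp X 2 μ) (hX' : MemLp X' 2 μ) :
    ∫ ω, ‖∫ ω', X ω' ∂μ - trackingUpdate β y (X ω) (X' ω)‖ ^ 2 ∂μ
      ≤ (1 - β) ^ 2 * ‖∫ ω', X' ω' ∂μ - y‖ ^ 2
        + 2 * (1 - β) ^ 2 * ∫ ω, ‖X ω - X' ω‖ ^ 2 ∂μ
        + 2 * β ^ 2 * ∫ ω, ‖X ω - ∫ ω', X ω' ∂μ‖ ^ 2 ∂μ := by
  set W : Ω → E := fun ω => X ω - X' ω
  have hW : MemLp W 2 μ := hX.sub hX'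
  have hWmean : ∫ ω, W ω ∂μ = ∫ ω, X ω ∂μ - ∫ ω, X' ω ∂μ :=
    integral_sub (hX.integrable one_le_two) (hX'.integrable one_le_two)
  set U : Ω → E := fun ω => ∫ ω', W ω' ∂μ - W ω
  set V : Ω → E := fun ω => ∫ ω', X ω' ∂μ - X ω
  have hU : MemLp U 2 μ := (memLp_const _).sub hW
  have hV : MemLp V 2 μ := (memLp_const _).sub hX
  have hnoise : MemLp (fun ω => (1 - β) • U ω + β • V ω) 2 μ :=
    (hU.const_smul (1 - β)).add (hV.const_smul β)
  have hsplit : ∀ ω, ∫ ω', X ω' ∂μ - trackingUpdate β y (X ω) (X' ω)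
      = (1 - β) • (∫ ω', X' ω' ∂μ - y) + ((1 - β) • U ω + β • V ω) := fun ω => by
    simp only [trackingUpdate, U, V, W, hWmean]
    module
  have hnoise_mean : ∫ ω, ((1 - β) • U ω + β • V ω) ∂μ = 0 := by
    rw [integral_add (f := fun ω => (1 - β) • U ω) (g := fun ω => β • V ω)
        ((hU.integrable one_le_two).smul (1 - β)) ((hV.integrable one_le_two).smul β),
      integral_smul, integral_smul, integral_integral_sub_eq_zero (hW.integrable one_le_two),
      integral_integral_sub_eq_zero (hX.integrable one_le_two), smul_zero, smul_zero, add_zero]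
  have hU2 : ∫ ω, ‖U ω‖ ^ 2 ∂μ ≤ ∫ ω, ‖W ω‖ ^ 2 ∂μ := by
    simpa only [U, norm_sub_rev (∫ ω', W ω' ∂μ)] using integral_norm_sub_integral_sq_le hW
  simp_rw [hsplit]
  rw [integral_norm_add_sq_of_integral_eq_zero _ hnoise hnoise_mean, norm_smul, mul_pow,
    Real.norm_eq_abs, sq_abs]
  have hnoise_sq := integral_norm_smul_add_smul_sq_le (1 - β) β hU hV
  simp only [V, norm_sub_rev (∫ ω', X ω' ∂μ)] at hnoise_sq
  linarith [mul_le_mul_of_nonneg_left hU2 (by positivity : (0 : ℝ) ≤ 2 * (1 - β) ^ 2)]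

end InnerProductSpace

end SecondMoment

theorem stmt5_general {d m : ℕ} {Ω : Type*} [MeasurableSpace Ω]
    (μ : Measure Ω) [IsProbabilityMeasure μ]
    (g : EuclideanSpace ℝ (Fin d) → EuclideanSpace ℝ (Fin m))
    (G : EuclideanSpace ℝ (Fin d) → Ω → EuclideanSpace ℝ (Fin m))
    (Cg Vg β : ℝ)
    (hL2 : ∀ θ, MemLp (G θ) 2 μ)
    (hunbiased : ∀ θ, ∫ ω, G θ ω ∂μ = g θ)
    (hvar : ∀ θ, ∫ ω, ‖G θ ω - g θ‖ ^ 2 ∂μ ≤ Vg ^ 2)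
    (hLipG : ∀ ω θ θ', ‖G θ ω - G θ' ω‖ ≤ Cg * ‖θ - θ'‖)
    (θkm1 θk : EuclideanSpace ℝ (Fin d)) (yk : EuclideanSpace ℝ (Fin m)) :
    ∫ ω, ‖g θk - ((1 - β) • (yk + G θk ω - G θkm1 ω) + β • G θk ω)‖ ^ 2 ∂μ
      ≤ (1 - β) ^ 2 * ‖g θkm1 - yk‖ ^ 2
        + 4 * (1 - β) ^ 2 * Cg ^ 2 * ‖θk - θkm1‖ ^ 2
        + 2 * β ^ 2 * Vg ^ 2 := by
  have htrack := integral_norm_sub_trackingUpdate_sq_le β yk (hL2 θk) (hL2 θkm1)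
  simp only [trackingUpdate, hunbiased] at htrack
  have hdrift : ∫ ω, ‖G θk ω - G θkm1 ω‖ ^ 2 ∂μ ≤ (Cg * ‖θk - θkm1‖) ^ 2 :=
    integral_norm_sq_le_of_forall_norm_le fun ω => hLipG ω θk θkm1
  linarith [mul_le_mul_of_nonneg_left hdrift (by positivity : (0 : ℝ) ≤ 2 * (1 - β) ^ 2),
    mul_le_mul_of_nonneg_left (hvar θk) (by positivity : (0 : ℝ) ≤ 2 * β ^ 2),
    sq_nonneg ((1 - β) * Cg * ‖θk - θkm1‖)]

theorem stmt5 {d m : ℕ} {Ω : Type*} [MeasurableSpace Ω]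
    (μ : Measure Ω) [IsProbabilityMeasure μ]
    (g : EuclideanSpace ℝ (Fin d) → EuclideanSpace ℝ (Fin m))
    (G : EuclideanSpace ℝ (Fin d) → Ω → EuclideanSpace ℝ (Fin m))
    (Cg Vg β : ℝ) (hβ0 : 0 < β) (hβ1 : β < 1)
    (hL2 : ∀ θ, MemLp (G θ) 2 μ)
    (hunbiased : ∀ θ, ∫ ω, G θ ω ∂μ = g θ)
    (hvar : ∀ θ, ∫ ω, ‖G θ ω - g θ‖ ^ 2 ∂μ ≤ Vg ^ 2)
    (hLipG : ∀ ω θ θ', ‖G θ ω - G θ' ω‖ ≤ Cg * ‖θ - θ'‖)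
    (hLipg : ∀ θ θ', ‖g θ - g θ'‖ ≤ Cg * ‖θ - θ'‖)
    (θkm1 θk : EuclideanSpace ℝ (Fin d)) (yk : EuclideanSpace ℝ (Fin m)) :
    ∫ ω, ‖g θk - ((1 - β) • (yk + G θk ω - G θkm1 ω) + β • G θk ω)‖ ^ 2 ∂μ
      ≤ (1 - β) ^ 2 * ‖g θkm1 - yk‖ ^ 2
        + 4 * (1 - β) ^ 2 * Cg ^ 2 * ‖θk - θkm1‖ ^ 2
        + 2 * β ^ 2 * Vg ^ 2 :=
  stmt5_general μ g G Cg Vg β hL2 hunbiased hvar hLipG θkm1 θk yk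
end

section
/- Let η₁, η₂ satisfy 0 ≤ η₁ < √η₂ < 1 and set γ = η₁²/η₂. Suppose real sequences satisfy h_{k+1} = η₁ h_k + (1−η₁)∇_k with h_0 = 0, and v̂_{k+1} ≥ (1−η₂)∑_{l=0}^{k} η₂^{k−l} ∇_l². Then h_{k+1}² ≤ (1−η₂)^{-1}(1−γ)^{-1} v̂_{k+1}. -/
/-!
Unrolling the recursion, `h (k+1) = (1 - η₁) ∑_{l ≤ k} η₁^(k-l) ∇_l`. Since `η₁² = γ η₂`,
Cauchy–Schwarz with the weights `γ^(k-l)` and `η₂^(k-l) ∇_l²` bounds the square of this sum by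
`(∑ γ^(k-l)) (∑ η₂^(k-l) ∇_l²)`; the first factor is a geometric sum at most `(1 - γ)⁻¹`, the
second is at most `(1 - η₂)⁻¹ v̂_{k+1}`.
-/

open Finset

theorem eq_sum_pow_mul_of_succ_eq {R : Type*} [CommSemiring R] {h u : ℕ → R} {a : R}
    (h0 : h 0 = 0) (hrec : ∀ k, h (k + 1) = a * h k + u k) (k : ℕ) :
    h (k + 1) = ∑ l ∈ range (k + 1), a ^ (k - l) * u l := by
  induction k with
  | zero => simp [hrec, h0]
  | succ k ih =>
    rw [hrec, ih, sum_range_succ _ (k + 1), mul_sum, Nat.sub_self, pow_zero, one_mul]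
    congr 1
    refine sum_congr rfl fun l hl => ?_
    rw [Nat.sub_add_comm (mem_range_succ_iff.mp hl), pow_succ]
    ring

theorem sq_sum_pow_mul_le {ι R : Type*} [CommRing R] [LinearOrder R] [IsStrictOrderedRing R]
    (s : Finset ι) (e : ι → ℕ) (x : ι → R) {a b c : R}
    (hb : 0 ≤ b) (hc : 0 ≤ c) (habc : a ^ 2 = b * c) :
    (∑ i ∈ s, a ^ e i * x i) ^ 2 ≤ (∑ i ∈ s, b ^ e i) * ∑ i ∈ s, c ^ e i * x i ^ 2 := by
  refine sum_sq_le_sum_mul_sum_of_sq_le_mul s (fun i _ => by positivity)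
    (fun i _ => by positivity) fun i _ => le_of_eq ?_
  rw [mul_pow, ← pow_mul, mul_comm (e i), pow_mul, habc, mul_pow]
  ring

theorem sum_range_pow_sub_le_inv_one_sub {K : Type*} [Field K] [LinearOrder K]
    [IsStrictOrderedRing K] {γ : K} (hγ0 : 0 ≤ γ) (hγ1 : γ < 1) (k : ℕ) :
    ∑ l ∈ range (k + 1), γ ^ (k - l) ≤ (1 - γ)⁻¹ := by
  have hreflect := sum_range_reflect (γ ^ ·) (k + 1)
  rw [add_tsub_cancel_right] at hreflect
  rw [hreflect, ← Nat.Ico_zero_eq_range]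
  simpa using geom_sum_Ico_le_of_lt_one (m := 0) (n := k + 1) hγ0 hγ1

theorem stmt12 (η₁ η₂ γ : ℝ) (h grad vhat : ℕ → ℝ)
    (hη0 : 0 ≤ η₁) (hη1 : η₁ < Real.sqrt η₂) (hη2 : Real.sqrt η₂ < 1)
    (hγ : γ = η₁ ^ 2 / η₂)
    (h0 : h 0 = 0)
    (hrec : ∀ k, h (k + 1) = η₁ * h k + (1 - η₁) * grad k)
    (hv : ∀ k, vhat (k + 1) ≥ (1 - η₂) * ∑ l ∈ Finset.range (k + 1), η₂ ^ (k - l) * (grad l) ^ 2) :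
    ∀ k, (h (k + 1)) ^ 2 ≤ (1 - η₂)⁻¹ * (1 - γ)⁻¹ * vhat (k + 1) := by
  intro k
  have hη₂0 : 0 < η₂ := Real.sqrt_pos.mp (hη0.trans_lt hη1)
  have hη₂1 : η₂ < 1 := by simpa using (Real.sqrt_lt' one_pos).mp hη2
  have hγ0 : 0 ≤ γ := hγ ▸ by positivity
  have hγ1 : γ < 1 := by rwa [hγ, div_lt_one hη₂0, ← Real.lt_sqrt hη0]
  have hγη₂ : η₁ ^ 2 = γ * η₂ := by rw [hγ, div_mul_cancel₀ _ hη₂0.ne']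
  set S := ∑ l ∈ range (k + 1), η₂ ^ (k - l) * grad l ^ 2
  have hS : S ≤ (1 - η₂)⁻¹ * vhat (k + 1) := by
    rw [inv_mul_eq_div, le_div_iff₀' (sub_pos.mpr hη₂1)]
    exact hv k
  have hunroll : h (k + 1) = (1 - η₁) * ∑ l ∈ range (k + 1), η₁ ^ (k - l) * grad l := by
    rw [eq_sum_pow_mul_of_succ_eq h0 hrec, mul_sum]
    exact sum_congr rfl fun l _ => by ring
  have hdamp : (1 - η₁) ^ 2 ≤ 1 := by nlinarith [hη1.trans hη2]
  calc h (k + 1) ^ 2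
      ≤ (∑ l ∈ range (k + 1), η₁ ^ (k - l) * grad l) ^ 2 := by
        rw [hunroll, mul_pow]
        exact mul_le_of_le_one_left (sq_nonneg _) hdamp
    _ ≤ (∑ l ∈ range (k + 1), γ ^ (k - l)) * S :=
        sq_sum_pow_mul_le _ _ _ hγ0 hη₂0.le hγη₂
    _ ≤ (1 - γ)⁻¹ * ((1 - η₂)⁻¹ * vhat (k + 1)) := by
        have : 0 ≤ S := sum_nonneg fun l _ => by positivity
        gcongr
        exact sum_range_pow_sub_le_inv_one_sub hγ0 hγ1 k
    _ = (1 - η₂)⁻¹ * (1 - γ)⁻¹ * vhat (k + 1) := by ring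
end
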